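/- Let A ⊆ ℝ² be a Jordan domain with Lipschitz-regular boundary, let i ∈ {1,2} (with B¹ = A, B² = A*), let r₀ > 0, and let F : ℝ² → ℝ² be measurable and continuous on B^i ∩ (∂A)_{⊕r₀}. Then for H¹-almost every q ∈ ∂A and every s ∈ [−1,1], r⁻¹ G^i_{r,C}(s,q) → (−1)^i · 2√(1−s²) · (F(q)·u_A(q)^⊥) as r ↓ 0. -/

import Mathlib

open MeasureTheory Filter Set Metric

noncomputable section

abbrev V2 : Type := EuclideanSpace ℝ (Fin 2)

/-- The unit vector `(cos θ, sin θ)`. -/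
def uvec (θ : ℝ) : V2 := !₂[Real.cos θ, Real.sin θ]

/-- The unit vector `(-sin θ, cos θ)`, perpendicular to `uvec θ`. -/
def uperp (θ : ℝ) : V2 := !₂[-Real.sin θ, Real.cos θ]

/-- The counterclockwise perpendicular `x^⊥ = (-x₂, x₁)`. -/
def perpv (v : V2) : V2 := !₂[-(v 1), v 0]

/-- The tangent cone of `S` at `p`. -/
def TanCone (S : Set V2) (p : V2) : Set V2 :=
  {v | ∃ ps : ℕ → V2, (∀ n, ps n ∈ S \ {p}) ∧
    Tendsto ps atTop (nhds p) ∧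
    Tendsto (fun n => ‖ps n - p‖⁻¹ • (ps n - p)) atTop (nhds (‖v‖⁻¹ • v))}

/-- The normal cone of `S` at `p`. -/
def NorCone (S : Set V2) (p : V2) : Set V2 :=
  {u | ∀ v ∈ TanCone S p, (inner ℝ u v : ℝ) ≤ 0}

/-- `C` is a Jordan curve. -/
def IsJordanCurve (C : Set V2) : Prop :=
  C.Nonempty ∧ ∃ φ : ℝ → V2, ContinuousOn φ (Icc 0 1) ∧ InjOn φ (Ioo 0 1) ∧
    φ 0 = φ 1 ∧ φ '' Icc 0 1 = C

/-- `A` is a Jordan domain. -/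
def IsJordanDomain (A : Set V2) : Prop :=
  IsCompact A ∧ IsConnected (interior A) ∧ IsJordanCurve (frontier A)

/-- `q` is a regular boundary point of `A`, with outward unit normal `uA q`. -/
def RegularAt (A : Set V2) (uA : V2 → V2) (q : V2) : Prop :=
  ‖uA q‖ = 1 ∧ (∀ v ∈ TanCone (frontier A) q, (inner ℝ (uA q) v : ℝ) = 0) ∧
  NorCone A q = {w | ∃ l : ℝ, 0 ≤ l ∧ w = l • uA q} ∧
  NorCone (closure Aᶜ) q = {w | ∃ l : ℝ, 0 ≤ l ∧ w = -(l • uA q)}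

/-- The Jordan domain `A` has Lipschitz-regular boundary, with outward unit
normal field `uA` (set to `0` at the `H¹`-null set of irregular points). -/
def LipschitzRegular (A : Set V2) (uA : V2 → V2) : Prop :=
  (∃ (K : NNReal) (φ : ℝ → V2), LipschitzOnWith K φ (Icc 0 1) ∧ InjOn φ (Ioo 0 1) ∧
    φ 0 = φ 1 ∧ φ '' Icc 0 1 = frontier A) ∧
  (∀ q ∈ frontier A, RegularAt A uA q ∨ uA q = 0) ∧
  μH[1] {q | q ∈ frontier A ∧ ¬ RegularAt A uA q} = 0

/-- `B¹ = A`, `B² = A* = closure Aᶜ`. -/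
def Bset (A : Set V2) (i : ℕ) : Set V2 := if i = 1 then A else closure Aᶜ

/-- The circle flux `G^i_{r,D}(s,q)`. -/
def GD (A : Set V2) (uA : V2 → V2) (F : V2 → V2) (i : ℕ) (r s : ℝ) (q : V2) : ℝ :=
  r * ∫ θ in (0:ℝ)..(2 * Real.pi),
    (Bset A i).indicator (fun x => (inner ℝ (F x) (uvec θ) : ℝ))
      (q + (r * s) • uA q + r • uvec θ)

/-- The circle circulation `G^i_{r,C}(s,q)`. -/
def GC (A : Set V2) (uA : V2 → V2) (F : V2 → V2) (i : ℕ) (r s : ℝ) (q : V2) : ℝ :=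
  r * ∫ θ in (0:ℝ)..(2 * Real.pi),
    (Bset A i).indicator (fun x => (inner ℝ (F x) (uperp θ) : ℝ))
      (q + (r * s) • uA q + r • uvec θ)

end

/-!
Write `u_A(q) = u(α)` at a regular boundary point `q`. The circle point
`q + r s u_A(q) + r u(θ)` is `q + r w(θ)` with `w(θ) = s u_A(q) + u(θ)` and
`⟨u_A(q), w(θ)⟩ = s + cos(θ - α)`. Since `u_A(q)` spans `nor(A, q)` and `-u_A(q)` spans
`nor(A*, q)`, a direction with `⟨u_A(q), w⟩ > 0` is not tangent to `A`, so `q + r w ∉ A` for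
small `r`; symmetrically for `⟨u_A(q), w⟩ < 0` and `A*`. So for all `θ` off the null set
`s + cos(θ - α) = 0`, the integrand of `r⁻¹ G^i_{r,C}(s, q)` tends to `F(q) · u^⊥(θ)` on the arc
`(-1)^i (s + cos(θ - α)) > 0` and to `0` elsewhere, and `F` is bounded near `q` on `B^i`, so
dominated convergence applies. The arc is centred at `γ = α + π` for `A` and `γ = α` for `A*`,
with half-width `β` and `sin β = √(1 - s²)`; since `u^⊥ = u'`, the integral of `F(q) · u^⊥` over
it is `F(q) · (u(γ + β) - u(γ - β)) = 2 sin β · F(q) · u^⊥(γ)`.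
-/

open Real Topology
open scoped RealInnerProductSpace

lemma inner_V2_eq (x y : V2) : ⟪x, y⟫ = x 0 * y 0 + x 1 * y 1 := by
  simp [EuclideanSpace.inner_eq_star_dotProduct, mul_comm]

lemma continuous_uvec : Continuous uvec :=
  (PiLp.continuous_toLp _ _).comp (continuous_pi fun i => by fin_cases i <;> simp <;> fun_prop)

lemma continuous_uperp : Continuous uperp :=
  (PiLp.continuous_toLp _ _).comp (continuous_pi fun i => by fin_cases i <;> simp <;> fun_prop)

lemma norm_uvec (θ : ℝ) : ‖uvec θ‖ = 1 := by
  simp [EuclideanSpace.norm_eq, uvec, Fin.sum_univ_two]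

lemma norm_uperp (θ : ℝ) : ‖uperp θ‖ = 1 := by
  simp [EuclideanSpace.norm_eq, uperp, Fin.sum_univ_two]

lemma perpv_uvec (α : ℝ) : perpv (uvec α) = uperp α := by
  ext i; fin_cases i <;> simp [perpv, uvec, uperp]

lemma uperp_add_pi (α : ℝ) : uperp (α + π) = -uperp α := by
  ext i; fin_cases i <;> simp [uperp]

lemma inner_uvec_uvec (α θ : ℝ) : ⟪uvec α, uvec θ⟫ = cos (θ - α) := by
  simp [inner_V2_eq, uvec, cos_sub]; ring

lemma exists_eq_uvec_of_norm_eq_one {u : V2} (hu : ‖u‖ = 1) : ∃ α, u = uvec α := by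
  set z : ℂ := ⟨u 0, u 1⟩
  have hz : ‖z‖ = 1 := by
    rw [← hu, EuclideanSpace.norm_eq, Complex.norm_def, Complex.normSq_apply, Fin.sum_univ_two]
    simp [z, sq]
  have hz0 : z ≠ 0 := norm_ne_zero_iff.mp (by simp [hz])
  refine ⟨z.arg, ?_⟩
  ext i; fin_cases i
  · simp [uvec, Complex.cos_arg hz0, hz, z]
  · simp [uvec, Complex.sin_arg, hz, z]

lemma inner_uvec_right (v : V2) (θ : ℝ) : ⟪v, uvec θ⟫ = v 0 * cos θ + v 1 * sin θ := by
  simp [inner_V2_eq, uvec]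

lemma inner_uperp_right (v : V2) (θ : ℝ) : ⟪v, uperp θ⟫ = v 0 * -sin θ + v 1 * cos θ := by
  simp [inner_V2_eq, uperp]

lemma hasDerivAt_inner_uvec (v : V2) (θ : ℝ) :
    HasDerivAt (fun θ => ⟪v, uvec θ⟫) ⟪v, uperp θ⟫ θ := by
  simp only [inner_uvec_right, inner_uperp_right]
  exact ((hasDerivAt_cos θ).const_mul _).add ((hasDerivAt_sin θ).const_mul _)

lemma integral_inner_uperp (v : V2) (a b : ℝ) :
    ∫ θ in a..b, ⟪v, uperp θ⟫ = ⟪v, uvec b⟫ - ⟪v, uvec a⟫ :=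
  intervalIntegral.integral_eq_sub_of_hasDerivAt (fun θ _ => hasDerivAt_inner_uvec v θ)
    ((continuous_const.inner (𝕜 := ℝ) continuous_uperp).intervalIntegrable _ _)

lemma setOf_lt_cos_inter_Ioc {s : ℝ} (hs : s ∈ Icc (-1 : ℝ) 1) :
    {φ | s < cos φ} ∩ Ioc (-π) π = Ioo (-arccos s) (arccos s) := by
  ext φ
  by_cases hφ : φ ∈ Ioc (-π) π
  · have hφπ : |φ| ≤ π := abs_le.mpr ⟨hφ.1.le, hφ.2⟩
    have hlt : s < cos φ ↔ |φ| < arccos s := by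
      conv_lhs => rw [← cos_abs, ← cos_arccos hs.1 hs.2]
      exact strictAntiOn_cos.lt_iff_gt ⟨arccos_nonneg _, arccos_le_pi _⟩ ⟨abs_nonneg _, hφπ⟩
    simp [hφ, hlt, abs_lt]
  · have := arccos_le_pi s
    simp only [mem_Ioc, not_and, not_le] at hφ
    simp only [mem_inter_iff, mem_Ioc, mem_Ioo]
    constructor
    · rintro ⟨-, h₁, h₂⟩
      exact absurd (hφ h₁) h₂.not_gt
    · rintro ⟨h₁, h₂⟩
      linarith [hφ (by linarith)]

lemma integral_indicator_lt_cos_sub (v : V2) (α : ℝ) {s : ℝ} (hs : s ∈ Icc (-1 : ℝ) 1) :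
    ∫ θ in (0 : ℝ)..2 * π, {θ | s < cos (θ - α)}.indicator (fun θ => ⟪v, uperp θ⟫) θ
      = 2 * √(1 - s ^ 2) * ⟪v, uperp α⟫ := by
  set g := fun θ => {θ | s < cos (θ - α)}.indicator (fun θ => ⟪v, uperp θ⟫) θ
  have hg : Function.Periodic g (2 * π) := by
    intro θ
    simp [g, indicator_apply, add_sub_right_comm, uperp]
  calc ∫ θ in (0 : ℝ)..2 * π, g θ = ∫ θ in (α - π)..(α - π) + 2 * π, g θ := by
        simpa using hg.intervalIntegral_add_eq 0 (α - π)
    _ = ∫ φ in -π..π, g (φ + α) := by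
        rw [intervalIntegral.integral_comp_add_right]; ring_nf
    _ = ∫ φ in -π..π, {φ | s < cos φ}.indicator (fun φ => ⟪v, uperp (φ + α)⟫) φ := by
        simp [g, indicator_apply]
    _ = ∫ φ in Ioo (-arccos s) (arccos s), ⟪v, uperp (φ + α)⟫ := by
        rw [intervalIntegral.integral_of_le (by linarith [pi_pos]),
          integral_indicator (measurableSet_lt measurable_const continuous_cos.measurable),
          Measure.restrict_restrict (measurableSet_lt measurable_const continuous_cos.measurable),
          setOf_lt_cos_inter_Ioc hs]
    _ = ∫ φ in -arccos s..arccos s, ⟪v, uperp (φ + α)⟫ := by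
        rw [intervalIntegral.integral_of_le (by linarith [arccos_nonneg s]),
          integral_Ioc_eq_integral_Ioo]
    _ = ⟪v, uvec (α + arccos s)⟫ - ⟪v, uvec (α - arccos s)⟫ := by
        rw [intervalIntegral.integral_comp_add_right (fun θ => ⟪v, uperp θ⟫),
          integral_inner_uperp]
        ring_nf
    _ = 2 * √(1 - s ^ 2) * ⟪v, uperp α⟫ := by
        simp only [inner_uvec_right, inner_uperp_right, cos_add, sin_add, cos_sub, sin_sub,
          sin_arccos]
        ring

lemma integral_indicator_sign_cos_sub (v : V2) (α : ℝ) {i : ℕ} (hi : i = 1 ∨ i = 2) {s : ℝ}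
    (hs : s ∈ Icc (-1 : ℝ) 1) :
    ∫ θ in (0 : ℝ)..2 * π,
        {θ | 0 < (-1) ^ i * (s + cos (θ - α))}.indicator (fun θ => ⟪v, uperp θ⟫) θ
      = (-1) ^ i * (2 * √(1 - s ^ 2)) * ⟪v, uperp α⟫ := by
  rcases hi with rfl | rfl
  · have hset : {θ | 0 < (-1) ^ 1 * (s + cos (θ - α))} = {θ | s < cos (θ - (α + π))} := by
      ext θ
      simp only [mem_ofPred_eq, ← sub_sub, cos_sub_pi]
      constructor <;> intro <;> linarith
    rw [hset, integral_indicator_lt_cos_sub v (α + π) hs, uperp_add_pi, inner_neg_right]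
    ring
  · have hset : {θ | 0 < (-1) ^ 2 * (s + cos (θ - α))} = {θ | -s < cos (θ - α)} := by
      ext θ
      simp only [mem_ofPred_eq]
      constructor <;> intro <;> linarith
    rw [hset, integral_indicator_lt_cos_sub v α ⟨by linarith [hs.2], by linarith [hs.1]⟩]
    rw [neg_sq]; ring

lemma countable_setOf_cos_sub_eq (α c : ℝ) : {θ | cos (θ - α) = c}.Countable := by
  by_cases hc : ∃ x, cos x = c
  · obtain ⟨x, rfl⟩ := hc
    refine ((countable_range fun k : ℤ => 2 * k * π + x + α).union
      (countable_range fun k : ℤ => 2 * k * π - x + α)).mono fun θ hθ => ?_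
    obtain ⟨k, hk | hk⟩ := cos_eq_cos_iff.mp hθ.symm
    · exact Or.inl ⟨k, by linarith⟩
    · exact Or.inr ⟨k, by linarith⟩
  · push Not at hc
    simp [hc]

lemma ae_cos_sub_ne (α c : ℝ) : ∀ᵐ θ : ℝ, cos (θ - α) ≠ c :=
  measure_eq_zero_iff_ae_notMem.mp ((countable_setOf_cos_sub_eq α c).measure_zero volume)

lemma tendsto_indicator_add_smul_of_eventually_mem {E β : Type*} [NormedAddCommGroup E]
    [NormedSpace ℝ E] [TopologicalSpace β] [Zero β] {B : Set E} {g : E → β} {q w : E}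
    (hg : ContinuousWithinAt g B q) (hB : ∀ᶠ r in 𝓝[>] (0 : ℝ), q + r • w ∈ B) :
    Tendsto (fun r : ℝ => B.indicator g (q + r • w)) (𝓝[>] 0) (𝓝 (g q)) := by
  have hline : Tendsto (fun r : ℝ => q + r • w) (𝓝[>] 0) (𝓝[B] q) := by
    refine tendsto_nhdsWithin_of_tendsto_nhds_of_eventually_within _ ?_ hB
    have hc : Continuous fun r : ℝ => q + r • w := by fun_prop
    have := (hc.tendsto 0).mono_left (nhdsWithin_le_nhds (s := Ioi 0))
    simpa using this
  exact (hg.tendsto.comp hline).congr' (hB.mono fun r hr => (indicator_of_mem hr g).symm)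

lemma ContinuousWithinAt.eventually_norm_indicator_add_smul_le {E G : Type*}
    [NormedAddCommGroup E] [NormedSpace ℝ E] [NormedAddCommGroup G] {B : Set E} {F : E → G}
    {q : E} (hFq : ContinuousWithinAt F B q) {w : ℝ → E} {C : ℝ} (hwC : ∀ θ, ‖w θ‖ ≤ C) :
    ∀ᶠ r in 𝓝[>] (0 : ℝ), ∀ θ, ‖B.indicator F (q + r • w θ)‖ ≤ ‖F q‖ + 1 := by
  obtain ⟨δ, hδ, hFδ⟩ := Metric.continuousWithinAt_iff.mp hFq 1 one_pos
  have hC : 0 ≤ C := (norm_nonneg _).trans (hwC 0)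
  filter_upwards [Ioo_mem_nhdsGT (show (0 : ℝ) < δ / (C + 1) by positivity)] with r hr θ
  by_cases hx : q + r • w θ ∈ B
  · have hdist : dist (q + r • w θ) q < δ := by
      rw [dist_eq_norm, add_sub_cancel_left, norm_smul, Real.norm_of_nonneg hr.1.le]
      calc r * ‖w θ‖ ≤ r * (C + 1) := mul_le_mul_of_nonneg_left (by linarith [hwC θ]) hr.1.le
        _ < δ := (lt_div_iff₀ (by positivity)).mp hr.2
    rw [indicator_of_mem hx]
    linarith [norm_le_norm_add_norm_sub' (F (q + r • w θ)) (F q),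
      dist_eq_norm (F (q + r • w θ)) (F q), hFδ hx hdist]
  · rw [indicator_of_notMem hx, norm_zero]
    positivity

theorem tendsto_intervalIntegral_indicator_inner {E : Type*} [NormedAddCommGroup E]
    [InnerProductSpace ℝ E] [MeasurableSpace E] [BorelSpace E] [SecondCountableTopology E]
    {a b C : ℝ} {B : Set E} (hB : MeasurableSet B) {F : E → E} (hF : Measurable F) {q : E}
    (hFq : ContinuousWithinAt F B q) {w e : ℝ → E} (hw : Continuous w) (hwC : ∀ θ, ‖w θ‖ ≤ C)
    (he : Continuous e) (he1 : ∀ θ, ‖e θ‖ ≤ 1) {f : ℝ → ℝ}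
    (hf : ∀ᵐ θ, Tendsto (fun r : ℝ => B.indicator (fun x => ⟪F x, e θ⟫) (q + r • w θ))
      (𝓝[>] 0) (𝓝 (f θ))) :
    Tendsto (fun r : ℝ => ∫ θ in a..b, B.indicator (fun x => ⟪F x, e θ⟫) (q + r • w θ))
      (𝓝[>] 0) (𝓝 (∫ θ in a..b, f θ)) := by
  have hindicator : ∀ x v, B.indicator (fun x => ⟪F x, v⟫) x = ⟪B.indicator F x, v⟫ :=
    fun x v => by by_cases hx : x ∈ B <;> simp [hx]
  simp_rw [hindicator] at hf ⊢
  refine intervalIntegral.tendsto_integral_filter_of_dominated_convergence (fun _ => ‖F q‖ + 1)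
    (Eventually.of_forall fun r => ?_) ?_ intervalIntegrable_const (hf.mono fun θ h _ => h)
  · exact (((hF.indicator hB).comp (by fun_prop)).inner he.measurable).aestronglyMeasurable
  filter_upwards [hFq.eventually_norm_indicator_add_smul_le hwC] with r hr
  exact ae_of_all _ fun θ _ => (norm_inner_le_norm _ _).trans
    ((mul_le_of_le_one_right (norm_nonneg _) (he1 θ)).trans (hr θ))

lemma mem_tanCone_of_frequently {S : Set V2} {q w : V2} (hw : w ≠ 0)
    (h : ∃ᶠ r in 𝓝[>] (0 : ℝ), q + r • w ∈ S) : w ∈ TanCone S q := by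
  obtain ⟨r, hr, hrS⟩ := exists_seq_forall_of_frequently (h.and_eventually self_mem_nhdsWithin)
  have hr0 : ∀ n, 0 < r n := fun n => (hrS n).2
  refine ⟨fun n => q + r n • w, fun n => ⟨(hrS n).1, ?_⟩, ?_, ?_⟩
  · simpa using ⟨(hr0 n).ne', hw⟩
  · simpa using tendsto_const_nhds.add ((tendsto_nhds_of_tendsto_nhdsWithin hr).smul_const w)
  · refine tendsto_const_nhds.congr fun n => ?_
    rw [add_sub_cancel_left, norm_smul, Real.norm_of_nonneg (hr0 n).le, smul_smul, mul_inv,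
      mul_right_comm, inv_mul_cancel₀ (hr0 n).ne', one_mul]

lemma eventually_notMem_of_mem_norCone {S : Set V2} {q u w : V2} (hu : u ∈ NorCone S q)
    (h : 0 < ⟪u, w⟫) : ∀ᶠ r in 𝓝[>] (0 : ℝ), q + r • w ∉ S := by
  by_contra hS
  have hw : w ≠ 0 := by rintro rfl; simp at h
  simp only [not_eventually, not_not] at hS
  exact (hu w (mem_tanCone_of_frequently hw hS)).not_gt h

section RegularAt

variable {A : Set V2} {uA : V2 → V2} {q w : V2}

lemma RegularAt.mem_norCone (hq : RegularAt A uA q) : uA q ∈ NorCone A q :=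
  hq.2.2.1 ▸ ⟨1, zero_le_one, (one_smul ℝ _).symm⟩

lemma RegularAt.neg_mem_norCone_closure_compl (hq : RegularAt A uA q) :
    -uA q ∈ NorCone (closure Aᶜ) q :=
  hq.2.2.2 ▸ ⟨1, zero_le_one, by rw [one_smul]⟩

lemma RegularAt.eventually_mem_Bset (hq : RegularAt A uA q) {i : ℕ} (hi : i = 1 ∨ i = 2)
    (h : 0 < (-1) ^ i * ⟪uA q, w⟫) : ∀ᶠ r in 𝓝[>] (0 : ℝ), q + r • w ∈ Bset A i := by
  rcases hi with rfl | rfl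
  · filter_upwards [eventually_notMem_of_mem_norCone hq.neg_mem_norCone_closure_compl
      (by simpa [inner_neg_left] using h)] with r hr
    simp only [Bset, if_true]
    by_contra hA
    exact hr (subset_closure hA)
  · filter_upwards [eventually_notMem_of_mem_norCone hq.mem_norCone (by simpa using h)] with r hr
    exact subset_closure hr

lemma RegularAt.eventually_notMem_Bset (hq : RegularAt A uA q) {i : ℕ} (hi : i = 1 ∨ i = 2)
    (h : (-1) ^ i * ⟪uA q, w⟫ < 0) : ∀ᶠ r in 𝓝[>] (0 : ℝ), q + r • w ∉ Bset A i := by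
  rcases hi with rfl | rfl
  · simpa [Bset] using eventually_notMem_of_mem_norCone hq.mem_norCone (by simpa using h)
  · simpa [Bset] using eventually_notMem_of_mem_norCone hq.neg_mem_norCone_closure_compl
      (by simpa [inner_neg_left] using h)

lemma RegularAt.tendsto_indicator_add_smul (hq : RegularAt A uA q) {i : ℕ} (hi : i = 1 ∨ i = 2)
    {g : V2 → ℝ} (hg : ContinuousWithinAt g (Bset A i) q) (hw : ⟪uA q, w⟫ ≠ 0) :
    Tendsto (fun r : ℝ => (Bset A i).indicator g (q + r • w)) (𝓝[>] 0)
      (𝓝 (if 0 < (-1) ^ i * ⟪uA q, w⟫ then g q else 0)) := by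
  split_ifs with h
  · exact tendsto_indicator_add_smul_of_eventually_mem hg (hq.eventually_mem_Bset hi h)
  · have h' : (-1) ^ i * ⟪uA q, w⟫ < 0 :=
      (not_lt.mp h).lt_of_ne (mul_ne_zero (pow_ne_zero _ (by norm_num)) hw)
    exact tendsto_const_nhds.congr'
      ((hq.eventually_notMem_Bset hi h').mono fun r hr => (indicator_of_notMem hr g).symm)

end RegularAt

lemma isClosed_Bset {A : Set V2} (hA : IsClosed A) (i : ℕ) : IsClosed (Bset A i) := by
  unfold Bset
  split_ifs
  exacts [hA, isClosed_closure]

lemma frontier_subset_Bset {A : Set V2} (hA : IsClosed A) (i : ℕ) : frontier A ⊆ Bset A i := by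
  unfold Bset
  split_ifs
  · exact hA.frontier_eq ▸ sdiff_subset
  · exact frontier_eq_closure_inter_closure (s := A) ▸ inter_subset_right

/-- Pointwise limit of the normalized circle circulation at
`H¹`-a.e. boundary point. -/
theorem circle_circ_limit
    (A : Set V2) (uA : V2 → V2) (hA : IsJordanDomain A) (hreg : LipschitzRegular A uA)
    (i : ℕ) (hi : i = 1 ∨ i = 2) (r₀ : ℝ) (hr₀ : 0 < r₀) (F : V2 → V2)
    (hFmeas : Measurable F)
    (hFcont : ContinuousOn F (Bset A i ∩ Metric.cthickening r₀ (frontier A))) :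
    ∃ N : Set V2, μH[1] N = 0 ∧ ∀ q ∈ frontier A, q ∉ N → ∀ s ∈ Set.Icc (-1:ℝ) 1,
      Tendsto (fun r : ℝ => r⁻¹ * GC A uA F i r s q) (nhdsWithin 0 (Set.Ioi 0))
        (nhds ((-1:ℝ)^i * (2 * Real.sqrt (1 - s^2)) * (inner ℝ (F q) (perpv (uA q)) : ℝ))) := by
  refine ⟨{q | q ∈ frontier A ∧ ¬ RegularAt A uA q}, hreg.2.2, fun q hqf hqN s hs => ?_⟩
  have hq : RegularAt A uA q := by_contra fun h => hqN ⟨hqf, h⟩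
  obtain ⟨α, hα⟩ := exists_eq_uvec_of_norm_eq_one hq.1
  have hFq : ContinuousWithinAt F (Bset A i) q :=
    (continuousWithinAt_inter (nhds_le_nhdsSet hqf (cthickening_mem_nhdsSet _ hr₀))).mp
      (hFcont q ⟨frontier_subset_Bset hA.1.isClosed i hqf, self_subset_cthickening _ hqf⟩)
  set w : ℝ → V2 := fun θ => s • uA q + uvec θ
  have hw : ∀ θ, ⟪uA q, w θ⟫ = s + cos (θ - α) := fun θ => by
    simp [w, inner_add_right, real_inner_smul_right, hα, inner_uvec_uvec, norm_uvec]
  have hw2 : ∀ θ, ‖w θ‖ ≤ 2 := fun θ => (norm_add_le _ _).trans <| by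
    rw [norm_smul, hq.1, norm_uvec, mul_one, Real.norm_eq_abs]
    linarith [abs_le.mpr hs]
  have hpt : ∀ᵐ θ, Tendsto
      (fun r : ℝ => (Bset A i).indicator (fun x => ⟪F x, uperp θ⟫) (q + r • w θ)) (𝓝[>] 0)
      (𝓝 ({θ | 0 < (-1) ^ i * (s + cos (θ - α))}.indicator (fun θ => ⟪F q, uperp θ⟫) θ)) := by
    filter_upwards [ae_cos_sub_ne α (-s)] with θ hθ
    have hθ' : ⟪uA q, w θ⟫ ≠ 0 := by rw [hw]; contrapose! hθ; linarith
    convert hq.tendsto_indicator_add_smul hi (hFq.inner continuousWithinAt_const) hθ' using 2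
    simp only [indicator_apply, mem_ofPred_eq, hw]
  have hlim := tendsto_intervalIntegral_indicator_inner (a := 0) (b := 2 * π) (w := w)
    (isClosed_Bset hA.1.isClosed i).measurableSet hFmeas hFq (continuous_const.add continuous_uvec)
    hw2 continuous_uperp (fun θ => (norm_uperp θ).le) hpt
  rw [integral_indicator_sign_cos_sub _ _ hi hs, ← perpv_uvec, ← hα] at hlim
  refine hlim.congr' ?_
  filter_upwards [self_mem_nhdsWithin] with r (hr : 0 < r)
  simp only [GC, w, smul_add, mul_smul, add_assoc, inv_mul_cancel_left₀ hr.ne']
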